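/- arXiv:2312.09122 — 7 statements merged into one kernel-verified Lean document; each statement's English description precedes it below -/
import Mathlib

section
/- A countable torsion-free abelian group A is free if and only if every finitely generated subgroup of A is contained in a finitely generated pure subgroup of A. (Pontryagin's criterion.) -/
/-!
If `A` is free, a finitely generated subgroup involves only finitely many basis vectors, and the
span of finitely many basis vectors is pure. Conversely, enumerate `A = {a₀, a₁, …}` and build a
chain `0 = N₀ ≤ N₁ ≤ ⋯` of finitely generated pure subgroups with `aₙ ∈ Nₙ₊₁`. Each `Nₙ₊₁ / Nₙ`
is finitely generated and torsion-free, hence free, so `Nₙ` has a free complement `Cₙ` in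
`Nₙ₊₁`, and `A` is the internal direct sum of the `Cₙ`.
-/

open Module

namespace Submodule

variable {R M M' : Type*} [Ring R] [IsDomain R] [AddCommGroup M] [Module R M]
  [AddCommGroup M'] [Module R M']

theorem isTorsionFree_quotient_iff (N : Submodule R M) :
    IsTorsionFree R (M ⧸ N) ↔ ∀ (r : R) (m : M), r ≠ 0 → r • m ∈ N → m ∈ N := by
  rw [isTorsionFree_iff_smul_eq_zero]
  constructor
  · intro h r m hr hrm
    simpa [hr, ← Quotient.mk_smul, Quotient.mk_eq_zero] using h r (Quotient.mk m)
      ((Quotient.mk_eq_zero N).2 hrm)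
  · intro h r q hrq
    obtain ⟨m, rfl⟩ := Quotient.mk_surjective N q
    rw [← Quotient.mk_smul, Quotient.mk_eq_zero] at hrq
    rw [Quotient.mk_eq_zero, or_iff_not_imp_left]
    exact fun hr => h r m hr hrq

theorem isTorsionFree_quotient_comap (f : M →ₗ[R] M') (N : Submodule R M')
    [hN : IsTorsionFree R (M' ⧸ N)] : IsTorsionFree R (M ⧸ N.comap f) := by
  rw [isTorsionFree_quotient_iff] at hN ⊢
  intro r m hr hrm
  exact hN r (f m) hr (by simpa using hrm)

end Submodule

instance Finsupp.isTorsionFree_quotient_supported {R ι : Type*} [Ring R] [IsDomain R]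
    (s : Set ι) : IsTorsionFree R ((ι →₀ R) ⧸ supported R R s) := by
  rw [Submodule.isTorsionFree_quotient_iff]
  intro r v hr hrv
  rwa [mem_supported, support_smul_eq hr, ← mem_supported R] at hrv

theorem Submodule.FG.exists_fg_le_isTorsionFree_quotient {R M : Type*} [Ring R] [IsDomain R]
    [AddCommGroup M] [Module R M] [Module.Free R M] {X : Submodule R M} (hX : X.FG) :
    ∃ Y : Submodule R M, Y.FG ∧ X ≤ Y ∧ IsTorsionFree R (M ⧸ Y) := by
  classical
  obtain ⟨T, rfl⟩ := hX
  let b := Module.Free.chooseBasis R M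
  let s := T.biUnion fun a => (b.repr a).support
  refine ⟨(Finsupp.supported R R (s : Set _)).comap b.repr.toLinearMap, ?_, ?_,
    Submodule.isTorsionFree_quotient_comap _ _⟩
  · rw [Submodule.comap_equiv_eq_map_symm, Finsupp.supported_eq_span_single]
    exact (Submodule.fg_span (s.finite_toSet.image _)).map _
  · rw [Submodule.span_le]
    intro a ha
    rw [SetLike.mem_coe, Submodule.mem_comap, Finsupp.mem_supported]
    exact fun i hi => Finset.mem_biUnion.2 ⟨a, ha, hi⟩

namespace LinearMap

variable {R M P : Type*} [Ring R] [AddCommGroup M] [Module R M] [AddCommGroup P] [Module R P]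

theorem isCompl_ker_range_of_comp_eq_id {f : M →ₗ[R] P} {g : P →ₗ[R] M}
    (h : f ∘ₗ g = LinearMap.id) : IsCompl (ker f) (range g) := by
  have hfg (p : P) : f (g p) = p := LinearMap.congr_fun h p
  constructor
  · rw [Submodule.disjoint_def]
    rintro _ hker ⟨p, rfl⟩
    rw [mem_ker, hfg] at hker
    rw [hker, map_zero]
  · rw [codisjoint_iff, eq_top_iff]
    intro m _
    refine Submodule.mem_sup.2 ⟨m - g (f m), ?_, g (f m), ⟨f m, rfl⟩, sub_add_cancel _ _⟩
    rw [mem_ker, map_sub, hfg, sub_self]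

end LinearMap

theorem Submodule.exists_isCompl_of_projective_quotient {R M : Type*} [Ring R] [AddCommGroup M]
    [Module R M] (p : Submodule R M) [Projective R (M ⧸ p)] :
    ∃ q : Submodule R M, IsCompl p q ∧ Nonempty ((M ⧸ p) ≃ₗ[R] q) := by
  obtain ⟨g, hg⟩ := p.mkQ.exists_rightInverse_of_surjective p.range_mkQ
  have hinj : Function.Injective g :=
    Function.LeftInverse.injective (g := p.mkQ) (LinearMap.congr_fun hg)
  refine ⟨LinearMap.range g, ?_, ⟨LinearEquiv.ofInjective g hinj⟩⟩
  simpa using LinearMap.isCompl_ker_range_of_comp_eq_id hg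

theorem iSupIndep_of_disjoint_sup_range {α : Type*} [CompleteLattice α] [IsModularLattice α]
    [IsCompactlyGenerated α] {f : ℕ → α} (h : ∀ n, Disjoint (f n) ((Finset.range n).sup f)) :
    iSupIndep f := by
  have hrange (n : ℕ) : (Finset.range n).SupIndep f := by
    induction n with
    | zero => exact Finset.supIndep_empty f
    | succ n ih => rw [Finset.range_add_one]; exact ih.insert (h n)
  refine iSupIndep_iff_supIndep.2 fun s => ?_
  obtain ⟨n, hn⟩ := s.exists_nat_subset_range
  exact (hrange n).subset hn

theorem Submodule.exists_free_compl_of_le {R M : Type*} [CommRing R] [IsDomain R]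
    [IsPrincipalIdealRing R] [AddCommGroup M] [Module R M] {N N' : Submodule R M}
    [IsTorsionFree R (M ⧸ N)] (hle : N ≤ N') (hfg : N'.FG) :
    ∃ C : Submodule R M, Disjoint C N ∧ N ⊔ C = N' ∧ Module.Free R C := by
  have : Module.Finite R N' := Module.Finite.iff_fg.2 hfg
  have : IsTorsionFree R (N' ⧸ N.comap N'.subtype) := isTorsionFree_quotient_comap _ _
  obtain ⟨q, hpq, ⟨e⟩⟩ := (N.comap N'.subtype).exists_isCompl_of_projective_quotient
  have hN : (N.comap N'.subtype).map N'.subtype = N := by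
    rw [map_comap_subtype, inf_eq_right.2 hle]
  refine ⟨q.map N'.subtype, ?_, ?_,
    .of_equiv (e.trans (q.equivMapOfInjective _ N'.injective_subtype))⟩
  · simpa [hN] using disjoint_map N'.injective_subtype hpq.disjoint.symm
  · rw [← hN, ← map_sup, hpq.sup_eq_top, map_subtype_top]

theorem Submodule.exists_chain_of_forall_fg_le {R M : Type*} [Semiring R] [AddCommMonoid M]
    [Module R M] [Countable M] (P : Submodule R M → Prop) (hbot : P ⊥)
    (h : ∀ X : Submodule R M, X.FG → ∃ Y, Y.FG ∧ X ≤ Y ∧ P Y) :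
    ∃ N : ℕ → Submodule R M, N 0 = ⊥ ∧ (∀ n, N n ≤ N (n + 1)) ∧ (∀ n, (N n).FG ∧ P (N n)) ∧
      ⨆ n, N n = ⊤ := by
  obtain ⟨e, he⟩ := exists_surjective_nat M
  have step (n : ℕ) (Y : {Y : Submodule R M // Y.FG ∧ P Y}) :
      ∃ Y' : {Y : Submodule R M // Y.FG ∧ P Y}, Y.1 ⊔ span R {e n} ≤ Y'.1 := by
    obtain ⟨Y', hfg, hle, hP⟩ := h _ (Y.2.1.sup (fg_span_singleton (e n)))
    exact ⟨⟨Y', hfg, hP⟩, hle⟩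
  choose next hnext using step
  let N (n : ℕ) : {Y : Submodule R M // Y.FG ∧ P Y} := Nat.rec ⟨⊥, fg_bot, hbot⟩ next n
  refine ⟨fun n => (N n).1, rfl, fun n => le_sup_left.trans (hnext n (N n)), fun n => (N n).2, ?_⟩
  refine eq_top_iff.2 fun m _ => ?_
  obtain ⟨n, rfl⟩ := he m
  exact mem_iSup_of_mem (n + 1) (hnext n (N n) (mem_sup_right (mem_span_singleton_self _)))

theorem Module.free_of_chain_isTorsionFree_quotient {R M : Type*} [CommRing R] [IsDomain R]
    [IsPrincipalIdealRing R] [AddCommGroup M] [Module R M] (N : ℕ → Submodule R M)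
    [∀ n, IsTorsionFree R (M ⧸ N n)] (h0 : N 0 = ⊥) (hle : ∀ n, N n ≤ N (n + 1))
    (hfg : ∀ n, (N n).FG) (hsup : ⨆ n, N n = ⊤) : Module.Free R M := by
  choose C hdisj hsucc hfree using fun n => Submodule.exists_free_compl_of_le (hle n) (hfg (n + 1))
  have hN (n : ℕ) : N n = (Finset.range n).sup C := by
    induction n with
    | zero => exact h0
    | succ n ih => rw [Finset.range_add_one, Finset.sup_insert, ← ih, sup_comm, hsucc]
  have hind : iSupIndep C := iSupIndep_of_disjoint_sup_range fun n => hN n ▸ hdisj n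
  have htop : ⨆ n, C n = ⊤ := by
    rw [eq_top_iff, ← hsup]
    exact iSup_le fun n => (hN n).le.trans (Finset.sup_le fun i _ => le_iSup C i)
  classical
  have hint := DirectSum.isInternal_submodule_of_iSupIndep_of_iSup_eq_top hind htop
  exact .of_basis (hint.collectedBasis fun n => Module.Free.chooseBasis R (C n))

/-- Pontryagin's criterion: a countable torsion-free abelian group `A` is free if and
only if every finitely generated subgroup of `A` is contained in a finitely generated
pure subgroup of `A` (a subgroup `Y` is pure iff `A / Y` is torsion-free, i.e.
`n • a ∈ Y` with `n ≠ 0` implies `a ∈ Y`). -/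
theorem stmt1 (A : Type) [AddCommGroup A] [Countable A]
    (htf : ∀ (n : ℤ) (a : A), n ≠ 0 → n • a = 0 → a = 0) :
    Module.Free ℤ A ↔
      ∀ X : AddSubgroup A, X.FG →
        ∃ Y : AddSubgroup A, Y.FG ∧ X ≤ Y ∧
          ∀ (n : ℤ) (a : A), n ≠ 0 → n • a ∈ Y → a ∈ Y := by
  constructor
  · intro _ X hX
    obtain ⟨Y, hYfg, hXY, hY⟩ := Submodule.FG.exists_fg_le_isTorsionFree_quotient
      ((Submodule.fg_iff_addSubgroup_fg (AddSubgroup.toIntSubmodule X)).2 hX)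
    exact ⟨Y.toAddSubgroup, (Submodule.fg_iff_addSubgroup_fg Y).1 hYfg, hXY,
      (Submodule.isTorsionFree_quotient_iff Y).1 hY⟩
  · intro h
    obtain ⟨N, h0, hle, hN, hsup⟩ := Submodule.exists_chain_of_forall_fg_le
      (fun Y : Submodule ℤ A => IsTorsionFree ℤ (A ⧸ Y))
      ((Submodule.isTorsionFree_quotient_iff ⊥).2 fun n a hn ha => htf n a hn ha)
      fun X hX => by
        obtain ⟨Y, hYfg, hXY, hY⟩ := h X.toAddSubgroup ((Submodule.fg_iff_addSubgroup_fg X).1 hX)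
        exact ⟨AddSubgroup.toIntSubmodule Y, (Submodule.fg_iff_addSubgroup_fg _).2 hYfg, hXY,
          (Submodule.isTorsionFree_quotient_iff _).2 hY⟩
    have (n : ℕ) : IsTorsionFree ℤ (A ⧸ N n) := (hN n).2
    exact Module.free_of_chain_isTorsionFree_quotient N h0 hle (fun n => (hN n).1) hsup
end

section
/- Let 0 → K → F → A → 0 be a short exact sequence of abelian groups where F is torsion-free and K is free with basis B_K. If A is not torsion-free (equivalently, K is not a pure subgroup of F), then there exists a homomorphism φ : K → ℤ that does not extend to a homomorphism F → ℤ, and moreover φ can be chosen so that there is a unique t* ∈ B_K with φ(t*) = 1 and φ(t) = 0 for all other basis elements t ∈ B_K. -/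
/-!
If `n • x = f k` with `x ∉ f K`, some coordinate `kᵢ` of `k` is not divisible by `n`: otherwise
`k = n • k'`, and torsion-freeness of `F` forces `x = f k'`. The coordinate functional `φ = kᵢ`
then cannot extend to `ψ : F → ℤ`, since `φ k = ψ (n • x) = n • ψ x`.
-/

theorem Module.Basis.exists_zsmul_eq_of_forall_dvd_repr {ι K : Type*} [AddCommGroup K]
    (b : Module.Basis ι ℤ K) {n : ℤ} {k : K} (hdvd : ∀ i, n ∣ b.repr k i) :
    ∃ k' : K, n • k' = k := by
  refine ⟨b.repr.symm ((b.repr k).mapRange (· / n) (by simp)), b.repr.injective ?_⟩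
  ext i
  simp only [map_zsmul, LinearEquiv.apply_symm_apply, Finsupp.smul_apply,
    Finsupp.mapRange_apply, smul_eq_mul]
  exact Int.mul_ediv_cancel' (hdvd i)

theorem Module.Basis.exists_not_dvd_repr_of_notMem_range {ι K F : Type*} [AddCommGroup K]
    [AddCommGroup F] (b : Module.Basis ι ℤ K) {f : K →+ F}
    (htf : ∀ (n : ℤ) (x : F), n ≠ 0 → n • x = 0 → x = 0) {n : ℤ} {x : F} {k : K}
    (hn : n ≠ 0) (hk : f k = n • x) (hx : x ∉ f.range) : ∃ i, ¬ n ∣ b.repr k i := by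
  by_contra! hdvd
  obtain ⟨k', rfl⟩ := b.exists_zsmul_eq_of_forall_dvd_repr hdvd
  have htorsion : n • (f k' - x) = 0 := by rw [smul_sub, ← map_zsmul, hk, sub_self]
  exact hx ⟨k', sub_eq_zero.mp (htf n _ hn htorsion)⟩

theorem AddMonoidHom.dvd_apply_of_comp_eq {K F : Type*} [AddCommGroup K] [AddCommGroup F]
    {f : K →+ F} {φ : K →+ ℤ} {ψ : F →+ ℤ} (hψ : ψ.comp f = φ) {n : ℤ} {x : F} {k : K}
    (hk : f k = n • x) : n ∣ φ k :=
  ⟨ψ x, by rw [← hψ, comp_apply, hk, map_zsmul, smul_eq_mul]⟩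

theorem Module.Basis.existsUnique_coord_eq_one {ι R M : Type*} [CommRing R] [Nontrivial R]
    [AddCommGroup M] [Module R M] (b : Module.Basis ι R M) (i : ι) :
    ∃! j : ι, b.coord i (b j) = 1 ∧ ∀ j' : ι, j' ≠ j → b.coord i (b j') = 0 := by
  refine ⟨i, ⟨by simp, fun j hj => by simp [hj]⟩, ?_⟩
  rintro j ⟨hj, -⟩
  by_contra hne
  simp [hne] at hj

theorem stmt4_general (K F : Type) [AddCommGroup K] [AddCommGroup F]
    (ι : Type) (b : Module.Basis ι ℤ K)
    (f : K →+ F)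
    (htfF : ∀ (n : ℤ) (x : F), n ≠ 0 → n • x = 0 → x = 0)
    (hnotpure : ∃ (n : ℤ) (x : F), n ≠ 0 ∧ n • x ∈ f.range ∧ x ∉ f.range) :
    ∃ φ : K →+ ℤ,
      (¬ ∃ ψ : F →+ ℤ, ψ.comp f = φ) ∧
      ∃! i : ι, φ (b i) = 1 ∧ ∀ j : ι, j ≠ i → φ (b j) = 0 := by
  obtain ⟨n, x, hn, ⟨k, hk⟩, hx⟩ := hnotpure
  obtain ⟨i, hi⟩ := b.exists_not_dvd_repr_of_notMem_range htfF hn hk hx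
  refine ⟨(b.coord i).toAddMonoidHom, ?_, b.existsUnique_coord_eq_one i⟩
  rintro ⟨ψ, hψ⟩
  exact hi (AddMonoidHom.dvd_apply_of_comp_eq hψ hk)

/-- Let `0 → K → F → A → 0` be a short exact sequence of abelian groups where `F` is
torsion-free and `K` is free with basis indexed by `ι` (so `A ≅ F / K`, with `K`
embedded in `F` via the injective map `f`).  If `A` is not torsion-free
(equivalently, `K` is not pure in `F`), then there is a homomorphism `φ : K → ℤ`
that does not extend to a homomorphism `F → ℤ` and a unique basis element `t*` with
`φ t* = 1` and `φ t = 0` for every other basis element `t`. -/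
theorem stmt4 (K F : Type) [AddCommGroup K] [AddCommGroup F]
    (ι : Type) (b : Module.Basis ι ℤ K)
    (f : K →+ F) (hinj : Function.Injective f)
    (htfF : ∀ (n : ℤ) (x : F), n ≠ 0 → n • x = 0 → x = 0)
    (hnotpure : ∃ (n : ℤ) (x : F), n ≠ 0 ∧ n • x ∈ f.range ∧ x ∉ f.range) :
    ∃ φ : K →+ ℤ,
      (¬ ∃ ψ : F →+ ℤ, ψ.comp f = φ) ∧
      ∃! i : ι, φ (b i) = 1 ∧ ∀ j : ι, j ≠ i → φ (b j) = 0 :=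
  stmt4_general K F ι b f htfF hnotpure
end

section
/- Let A be a countable, torsion-free, nonfree abelian group, let 0 → K → F → A → 0 be a free resolution of A (F, K free abelian groups), and let B_K be a basis for K. Then there exists a homomorphism φ : K → ℤ such that φ does not extend to any homomorphism ψ : F → ℤ, and φ maps every element of B_K into {0, 1}. -/
/-!
By Pontryagin's criterion, a countable torsion-free group `A` that is not free contains a finitely
generated pure subgroup `T` and an element `a ∉ T` that is divisible modulo `T` by arbitrarily large
integers `q`. Lifting to the resolution gives `x ∈ F` and `W_q ∈ K` with `q • y_q ≡ x + W_q` modulo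
a finitely generated `S ≤ F`, while no nonzero multiple of `x` lies in `S + K`. Since `F` is free,
the coordinates of the `W_q` that are not divisible by `q` cannot all live on finitely many basis
vectors of `K`; this yields basis vectors `b (i l)` and indices `n l` in triangular position. The
`2 ^ ℵ₀` forms that are `1` on `{b (i l) | l ∈ T}` and `0` on the other basis vectors cannot all
extend to `F`: as `S + ℤ x` is finitely generated, two of the extensions would agree on it, and then
`q ∣ (φ_T - φ_T') (W_q)` for all `q`, which fails at the first index where `T` and `T'` differ.
-/

open Submodule

namespace Submodule

variable {M : Type*} [AddCommGroup M]

def pureClosure (S : Submodule ℤ M) : Submodule ℤ M where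
  carrier := {a | ∃ c : ℤ, c ≠ 0 ∧ c • a ∈ S}
  add_mem' := by
    rintro a b ⟨c, hc, hca⟩ ⟨d, hd, hdb⟩
    refine ⟨c * d, mul_ne_zero hc hd, ?_⟩
    rw [smul_add, mul_comm, mul_smul, mul_comm, mul_smul]
    exact add_mem (S.smul_mem d hca) (S.smul_mem c hdb)
  zero_mem' := ⟨1, one_ne_zero, by simp⟩
  smul_mem' z a := fun ⟨c, hc, hca⟩ => ⟨c, hc, by rw [smul_comm]; exact S.smul_mem z hca⟩

variable {S T : Submodule ℤ M} {a : M}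

theorem mem_pureClosure : a ∈ pureClosure S ↔ ∃ c : ℤ, c ≠ 0 ∧ c • a ∈ S := Iff.rfl

theorem le_pureClosure (S : Submodule ℤ M) : S ≤ pureClosure S :=
  fun a ha => ⟨1, one_ne_zero, by simpa⟩

theorem pureClosure_mono (h : S ≤ T) : pureClosure S ≤ pureClosure T :=
  fun _ ⟨c, hc, hca⟩ => ⟨c, hc, h hca⟩

theorem smul_mem_pureClosure_iff {c : ℤ} (hc : c ≠ 0) :
    c • a ∈ pureClosure S ↔ a ∈ pureClosure S :=
  ⟨fun ⟨d, hd, hda⟩ => ⟨d * c, mul_ne_zero hd hc, by rwa [mul_smul]⟩,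
    fun h => (pureClosure S).smul_mem c h⟩

@[simp]
theorem pureClosure_pureClosure : pureClosure (pureClosure S) = pureClosure S :=
  le_antisymm (fun _ ⟨_, hc, hca⟩ => (smul_mem_pureClosure_iff hc).mp hca) (le_pureClosure _)

@[simp]
theorem pureClosure_bot [Module.IsTorsionFree ℤ M] : pureClosure (⊥ : Submodule ℤ M) = ⊥ :=
  eq_bot_iff.mpr fun _ ⟨_, hc, hca⟩ => (smul_eq_zero_iff_right hc).mp hca

theorem comap_pureClosure {N : Type*} [AddCommGroup N] (f : N →ₗ[ℤ] M) :
    (pureClosure S).comap f = pureClosure (S.comap f) := by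
  ext x
  simp [mem_pureClosure]

instance isTorsionFree_quotient_pureClosure (S : Submodule ℤ M) :
    Module.IsTorsionFree ℤ (M ⧸ pureClosure S) := by
  refine .of_smul_eq_zero fun c q hcq => or_iff_not_imp_left.mpr fun hc => ?_
  obtain ⟨a, rfl⟩ := mkQ_surjective _ q
  rw [← map_smul] at hcq
  rw [mkQ_apply, Quotient.mk_eq_zero] at hcq ⊢
  exact (smul_mem_pureClosure_iff hc).mp hcq

end Submodule

section UnboundedDivisors

variable {M N : Type*} [AddCommGroup M] [AddCommGroup N]

def HasUnboundedDivisors (x : M) : Prop := ∀ n : ℕ, ∃ q : ℕ, n < q ∧ ∃ y : M, q • y = x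

theorem HasUnboundedDivisors.map {F : Type*} [FunLike F M N] [AddMonoidHomClass F M N] {x : M}
    (h : HasUnboundedDivisors x) (f : F) :
    HasUnboundedDivisors (f x) := fun n =>
  let ⟨q, hq, y, hy⟩ := h n
  ⟨q, hq, f y, by rw [← map_nsmul, hy]⟩

theorem hasUnboundedDivisors_mkQ_iff {S : Submodule ℤ M} {x : M} :
    HasUnboundedDivisors (S.mkQ x) ↔ ∀ n : ℕ, ∃ q : ℕ, n < q ∧ ∃ y : M, q • y - x ∈ S := by
  refine forall_congr' fun n => exists_congr fun q => and_congr_right fun _ => ?_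
  constructor
  · rintro ⟨y, hy⟩
    obtain ⟨y, rfl⟩ := mkQ_surjective S y
    exact ⟨y, by rwa [← Quotient.mk_eq_zero, Quotient.mk_sub, sub_eq_zero, Quotient.mk_smul]⟩
  · rintro ⟨y, hy⟩
    refine ⟨S.mkQ y, ?_⟩
    rwa [← Quotient.mk_eq_zero, Quotient.mk_sub, sub_eq_zero, Quotient.mk_smul] at hy

theorem HasUnboundedDivisors.mkQ_comap {f : M →ₗ[ℤ] N} (hf : Function.Surjective f)
    {T : Submodule ℤ N} {x : M} (h : HasUnboundedDivisors (T.mkQ (f x))) :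
    HasUnboundedDivisors ((T.comap f).mkQ x) := by
  rw [hasUnboundedDivisors_mkQ_iff] at h ⊢
  intro n
  obtain ⟨q, hq, y, hy⟩ := h n
  obtain ⟨y, rfl⟩ := hf y
  exact ⟨q, hq, y, by simpa using hy⟩

theorem HasUnboundedDivisors.eq_zero [Module.Free ℤ M] {x : M} (h : HasUnboundedDivisors x) :
    x = 0 := by
  let B := Module.Free.chooseBasis ℤ M
  refine B.repr.injective (Finsupp.ext fun i => ?_)
  obtain ⟨q, hq, y, rfl⟩ := h (B.repr x i).natAbs
  simp only [map_nsmul, Finsupp.smul_apply, nsmul_eq_mul, map_zero, Finsupp.coe_zero,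
    Pi.zero_apply] at hq ⊢
  exact Int.eq_zero_of_dvd_of_natAbs_lt_natAbs (dvd_mul_right _ _) (by simpa using hq)

end UnboundedDivisors

namespace Submodule

variable {M : Type*} [AddCommGroup M] {S : Submodule ℤ M} {x : M}

theorem mem_pureClosure_of_hasUnboundedDivisors_of_finite [Module.Finite ℤ M]
    (h : HasUnboundedDivisors (S.mkQ x)) : x ∈ pureClosure S := by
  have hx := (h.map (S.mapQ (pureClosure S) LinearMap.id (le_pureClosure S))).eq_zero
  simpa using hx

/-- Reduces to the finitely generated case through the coordinates on a finite set of basis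
vectors supporting `x` and the generators of `S`. -/
theorem mem_pureClosure_of_hasUnboundedDivisors [Module.Free ℤ M] (hS : S.FG)
    (h : HasUnboundedDivisors (S.mkQ x)) : x ∈ pureClosure S := by
  classical
  obtain ⟨s, rfl⟩ := hS
  let B := Module.Free.chooseBasis ℤ M
  let J : Finset _ := (B.repr x).support ∪ s.biUnion fun g => (B.repr g).support
  let θ : M →ₗ[ℤ] (J → ℤ) := LinearMap.pi fun j => B.coord j
  have hθ : ∀ f ∈ span ℤ (B '' J), θ f = 0 → f = 0 := by
    intro f hf hθf
    rw [B.mem_span_image] at hf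
    refine B.repr.injective (Finsupp.ext fun i => ?_)
    by_cases hi : i ∈ J
    · simpa [θ] using congrFun hθf ⟨i, hi⟩
    · simpa using mt (@hf i) hi
  have hxJ : x ∈ span ℤ (B '' J) := B.mem_span_image.mpr (by simp [J])
  have hsJ : span ℤ s ≤ span ℤ (B '' J) := span_le.mpr fun g hg => B.mem_span_image.mpr
    fun i hi => by simpa [J] using Or.inr ⟨g, hg, Finsupp.mem_support_iff.mp hi⟩
  have hθx : HasUnboundedDivisors (((span ℤ s).map θ).mkQ (θ x)) := by
    have hle : span ℤ (s : Set M) ≤ ((span ℤ (s : Set M)).map θ).comap θ := le_comap_map _ _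
    let g := (span ℤ (s : Set M)).mapQ ((span ℤ (s : Set M)).map θ) θ hle
    exact h.map g
  obtain ⟨c, hc, hcx⟩ := mem_pureClosure_of_hasUnboundedDivisors_of_finite hθx
  obtain ⟨t, ht, htx⟩ := mem_map.mp hcx
  refine ⟨c, hc, ?_⟩
  have : c • x - t = 0 := hθ _ (sub_mem (smul_mem _ _ hxJ) (hsJ ht)) (by simp [htx])
  rwa [sub_eq_zero.mp this]

end Submodule

section Chain

variable {R M : Type*} [Ring R] [AddCommGroup M] [Module R M] {A : ℕ → Submodule R M}
  {κ : ℕ → Type*} {v : ∀ n, κ n → M}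

theorem linearIndepOn_lt_and_span_eq_of_chain (hA : Monotone A) (h0 : A 0 = ⊥)
    (hvA : ∀ n j, v n j ∈ A (n + 1)) (hli : ∀ n, LinearIndependent R ((A n).mkQ ∘ v n))
    (hspan : ∀ n, (A (n + 1)).map (A n).mkQ ≤ span R (Set.range ((A n).mkQ ∘ v n))) (N : ℕ) :
    LinearIndepOn R (fun σ : Σ n, κ n => v σ.1 σ.2) {σ | σ.1 < N} ∧
      span R ((fun σ : Σ n, κ n => v σ.1 σ.2) '' {σ | σ.1 < N}) = A N := by
  set w := fun σ : Σ n, κ n => v σ.1 σ.2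
  have hmono : Monotone fun N => {σ : Σ n, κ n | σ.1 < N} :=
    fun m n h σ (hσ : σ.1 < m) => lt_of_lt_of_le hσ h
  induction N with
  | zero => simp [h0]
  | succ N ih =>
    have hsplit : {σ : Σ n, κ n | σ.1 < N + 1} = {σ | σ.1 < N} ∪ Set.range (Sigma.mk N) := by
      ext ⟨m, j⟩
      simp only [Order.lt_add_one_iff, Set.mem_ofPred_eq, Set.range_sigmaMk, Set.mem_union,
        Set.mem_preimage, Set.mem_singleton_iff]
      omega
    have hvN : span R (Set.range (v N)) ≤ span R (w '' {σ | σ.1 < N + 1}) :=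
      span_le.mpr fun _ ⟨j, hj⟩ => subset_span ⟨⟨N, j⟩, Nat.lt_succ_self N, hj⟩
    constructor
    · rw [hsplit]
      refine ih.1.union_of_quotient ?_
      rw [ih.2, linearIndepOn_range_iff sigma_mk_injective]
      exact hli N
    refine le_antisymm (span_le.mpr ?_) fun x hx => ?_
    · rintro _ ⟨σ, hσ, rfl⟩
      exact hA hσ (hvA σ.1 σ.2)
    have hxQ := hspan N (mem_map_of_mem hx)
    rw [Set.range_comp, ← map_span, mem_map] at hxQ
    obtain ⟨z, hz, hzx⟩ := hxQ
    have hxz : x - z ∈ A N := by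
      rw [← Submodule.Quotient.mk_eq_zero, Submodule.Quotient.mk_sub]
      exact sub_eq_zero.mpr hzx.symm
    rw [← sub_add_cancel x z]
    exact add_mem (span_mono (Set.image_mono (hmono N.le_succ)) (ih.2 ▸ hxz)) (hvN hz)

theorem Module.free_of_chain (A : ℕ → Submodule R M) (hA : Monotone A) (h0 : A 0 = ⊥)
    (hcover : ∀ x, ∃ n, x ∈ A n) [∀ n, Module.Free R ((A (n + 1)).map (A n).mkQ)] :
    Module.Free R M := by
  let Q n := (A (n + 1)).map (A n).mkQ
  let e n := Module.Free.chooseBasis R (Q n)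
  choose v hvA hve using fun n j => (e n j).2
  have hmkQ : ∀ n, (A n).mkQ ∘ v n = (Q n).subtype ∘ e n := fun n => funext (hve n)
  have key := linearIndepOn_lt_and_span_eq_of_chain hA h0 hvA
    (fun n => hmkQ n ▸ (e n).linearIndependent.map' _ (ker_subtype _))
    (fun n => by
      rw [hmkQ, Set.range_comp, ← map_span, (e n).span_eq, Submodule.map_top, range_subtype])
  have hU : ⋃ N, {σ : Σ n, Module.Free.ChooseBasisIndex R (Q n) | σ.1 < N} = Set.univ :=
    Set.iUnion_eq_univ_iff.mpr fun σ => ⟨σ.1 + 1, Nat.lt_succ_self _⟩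
  have hli :
      LinearIndependent R fun σ : Σ n, Module.Free.ChooseBasisIndex R (Q n) => v σ.1 σ.2 := by
    rw [← linearIndepOn_univ_iff, ← hU]
    exact linearIndepOn_iUnion_of_directed
      (Monotone.directed_le fun m n h σ (hσ : σ.1 < m) => lt_of_lt_of_le hσ h) fun N => (key N).1
  refine Module.Free.of_basis (Module.Basis.mk hli fun x _ => ?_)
  obtain ⟨n, hn⟩ := hcover x
  rw [← (key n).2] at hn
  exact span_mono (Set.image_subset_range _ _) hn

end Chain

section RankOne

variable {R : Type*} [AddCommGroup R] [Module.IsTorsionFree ℤ R] {x y : R}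

theorem mem_span_singleton_of_zsmul_eq_zsmul (hx : ∀ k : ℕ, 2 ≤ k → ∀ z : R, k • z ≠ x)
    {c e : ℤ} (hc : c ≠ 0) (h : c • y = e • x) : y ∈ ℤ ∙ x := by
  obtain ⟨g, c, e, hg, hce, rfl, rfl⟩ := Int.exists_gcd_one' (Int.gcd_pos_of_ne_zero_left e hc)
  have h : c • y = e • x := by
    rw [mul_comm, mul_smul, mul_comm, mul_smul] at h
    exact smul_right_injective R (Int.natCast_ne_zero.mpr hg.ne') h
  obtain ⟨u, w, huw⟩ := Int.isCoprime_iff_gcd_eq_one.mpr hce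
  -- Bezout makes `x` a multiple of `c`, so `c = ± 1`.
  have hcx : c • (u • x + w • y) = x := by
    rw [smul_add, smul_comm c w, h, smul_smul, smul_smul, ← add_smul, mul_comm c u, huw,
      one_smul]
  replace hcx : c.natAbs • (c.sign • (u • x + w • y)) = x := by
    rwa [← natCast_zsmul, smul_smul, mul_comm, Int.sign_mul_natAbs]
  have hc1 : c.natAbs = 1 := by
    by_contra hne
    exact hx _ (by have := Int.natAbs_ne_zero.mpr (left_ne_zero_of_mul hc); omega) _ hcx
  refine mem_span_singleton.mpr ⟨c * e, ?_⟩
  rw [mul_smul, ← h, smul_smul, ← Int.natAbs_mul_self, hc1, one_mul, Nat.cast_one, one_smul]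

variable (hR : ¬ Module.Finite ℤ R) {r : R} (hr : ∀ y : R, ∃ c : ℤ, c ≠ 0 ∧ c • y ∈ ℤ ∙ r)
include hR hr

theorem exists_two_le_nsmul_eq (hx : x ≠ 0) : ∃ k : ℕ, 2 ≤ k ∧ ∃ z : R, k • z = x := by
  by_contra! hdiv
  refine hR ⟨⟨{x}, eq_top_iff.mpr fun y _ => ?_⟩⟩
  obtain ⟨c, hc, m, hm⟩ := (hr y).imp fun _ => And.imp_right mem_span_singleton.mp
  obtain ⟨c₁, hc₁, m₁, hm₁⟩ := (hr x).imp fun _ => And.imp_right mem_span_singleton.mp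
  have hm₁0 : m₁ ≠ 0 := by
    rintro rfl
    exact hx ((smul_eq_zero_iff_right hc₁).mp (by rw [← hm₁, zero_smul]))
  rw [Finset.coe_singleton]
  refine mem_span_singleton_of_zsmul_eq_zsmul hdiv (mul_ne_zero hm₁0 hc) (e := m * c₁) ?_
  rw [mul_smul, ← hm, smul_comm, hm₁, ← mul_smul]

theorem hasUnboundedDivisors_of_ne_zero (hx : x ≠ 0) : HasUnboundedDivisors x := by
  intro n
  induction n generalizing x with
  | zero => exact ⟨1, one_pos, x, one_smul _ _⟩
  | succ n ih =>
    obtain ⟨k, hk, z, rfl⟩ := exists_two_le_nsmul_eq hR hr hx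
    obtain ⟨q, hq, y, rfl⟩ := ih (x := z) fun hz => hx (by rw [hz, smul_zero])
    exact ⟨k * q, by nlinarith, y, (smul_smul k q y).symm⟩

end RankOne

section Pontryagin

variable {A : Type*} [AddCommGroup A]

/-- The torsion-free rank-one group `pureClosure (T₀ ⊔ ℤ ∙ r) / pureClosure T₀` is not cyclic, so
it contains an element with unbounded divisors. -/
theorem exists_not_mem_pureClosure_hasUnboundedDivisors (T₀ : Submodule ℤ A) (r : A)
    (hT : (pureClosure T₀).FG) (hP : ¬ (pureClosure (T₀ ⊔ ℤ ∙ r)).FG) :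
    ∃ a, a ∉ pureClosure T₀ ∧ HasUnboundedDivisors ((pureClosure T₀).mkQ a) := by
  set T := pureClosure T₀
  let Q := (pureClosure (T₀ ⊔ ℤ ∙ r)).map T.mkQ
  have hQ : ¬ Module.Finite ℤ Q := fun h => hP <| fg_of_fg_map_of_fg_inf_ker T.mkQ
    (Module.Finite.iff_fg.mp h)
    (by rwa [ker_mkQ, inf_eq_right.mpr (pureClosure_mono le_sup_left)])
  let r' : Q :=
    ⟨T.mkQ r, mem_map_of_mem (le_pureClosure _ (mem_sup_right (mem_span_singleton_self r)))⟩
  have hr' : ∀ y : Q, ∃ c : ℤ, c ≠ 0 ∧ c • y ∈ ℤ ∙ r' := by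
    rintro ⟨_, p, ⟨c, hc, hcp⟩, rfl⟩
    obtain ⟨t, ht, s, hs, hcp⟩ := mem_sup.mp hcp
    obtain ⟨m, rfl⟩ := mem_span_singleton.mp hs
    refine ⟨c, hc, mem_span_singleton.mpr ⟨m, Subtype.ext ?_⟩⟩
    change m • T.mkQ r = c • T.mkQ p
    rw [← map_smul, ← map_smul, ← hcp, map_add, mkQ_apply T t,
      (Quotient.mk_eq_zero T).mpr (le_pureClosure T₀ ht), zero_add]
  have : Nontrivial Q := by
    by_contra h
    rw [not_nontrivial_iff_subsingleton] at h
    exact hQ inferInstance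
  obtain ⟨x, hx⟩ := exists_ne (0 : Q)
  obtain ⟨a, -, ha⟩ := mem_map.mp x.2
  refine ⟨a, fun haT => hx (Subtype.ext ?_), ?_⟩
  · rw [← ha, mkQ_apply, ZeroMemClass.coe_zero, Quotient.mk_eq_zero]
    exact haT
  · rw [ha]
    exact (hasUnboundedDivisors_of_ne_zero hQ hr' hx).map Q.subtype

/-- Pontryagin's criterion, in contrapositive form: enumerating `A` as `e 0, e 1, …`, the pure
closures of the spans of the initial segments form a chain with torsion-free successive quotients,
so if `A` is not free one of them is not finitely generated, and the first such step is where an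
element with unbounded divisors appears. -/
theorem exists_fg_not_mem_pureClosure_hasUnboundedDivisors [Countable A]
    [Module.IsTorsionFree ℤ A] (hA : ¬ Module.Free ℤ A) :
    ∃ T : Submodule ℤ A, T.FG ∧ ∃ a, a ∉ pureClosure T ∧ HasUnboundedDivisors (T.mkQ a) := by
  obtain ⟨e, he⟩ := exists_surjective_nat A
  let B n := pureClosure (span ℤ (e '' Set.Iio n))
  have hB0 : B 0 = ⊥ := by simp [B]
  have hex : ∃ n, ¬ (B n).FG := by
    by_contra! hfg
    have (n : ℕ) : Module.Free ℤ ((B (n + 1)).map (B n).mkQ) :=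
      have := Module.Finite.iff_fg.mpr ((hfg (n + 1)).map (B n).mkQ)
      inferInstance
    refine hA (Module.free_of_chain B (fun m n h => ?_) hB0 fun x => ?_)
    · exact pureClosure_mono (span_mono (Set.image_mono (Set.Iio_subset_Iio h)))
    · obtain ⟨n, rfl⟩ := he x
      exact ⟨n + 1, le_pureClosure _ (subset_span ⟨n, Nat.lt_succ_self n, rfl⟩)⟩
  obtain ⟨n, hfg, hfg'⟩ : ∃ n, (B n).FG ∧ ¬ (B (n + 1)).FG := by
    by_contra! h
    obtain ⟨n, hn⟩ := hex
    exact hn (Nat.rec (hB0 ▸ fg_bot) h n)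
  have hspan : span ℤ (e '' Set.Iio (n + 1)) = span ℤ (e '' Set.Iio n) ⊔ ℤ ∙ e n := by
    rw [sup_comm, ← span_insert, ← Set.image_insert_eq, Set.Iio_insert, Set.Iio_add_one_eq_Iic]
  obtain ⟨a, ha, hdiv⟩ := exists_not_mem_pureClosure_hasUnboundedDivisors _ (e n) hfg
    (by rwa [← hspan])
  exact ⟨B n, hfg, a, by rwa [pureClosure_pureClosure], hdiv⟩

end Pontryagin

theorem Submodule.exists_fg_sup_ker_eq_comap {R M N : Type*} [Ring R] [AddCommGroup M]
    [AddCommGroup N] [Module R M] [Module R N] (f : M →ₗ[R] N) (hf : Function.Surjective f)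
    {T : Submodule R N} (hT : T.FG) :
    ∃ S : Submodule R M, S.FG ∧ S ⊔ LinearMap.ker f = T.comap f := by
  classical
  obtain ⟨t, rfl⟩ := hT
  refine ⟨span R (t.image (Function.surjInv hf)), ⟨_, rfl⟩, ?_⟩
  rw [← comap_map_eq, map_span, Finset.coe_image, ← Set.image_comp,
    (Function.rightInverse_surjInv hf).id, Set.image_id]

theorem Module.Basis.exists_sub_nsmul_mem_span_image {ι K : Type*} [AddCommGroup K]
    (b : Module.Basis ι ℤ K) (E : Set ι) (q : ℕ) (w : K) (h : ∀ i ∉ E, (q : ℤ) ∣ b.repr w i) :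
    ∃ v, w - q • v ∈ span ℤ (b '' E) := by
  refine ⟨b.repr.symm ((b.repr w).mapRange (· / (q : ℤ)) (Int.zero_ediv _)), ?_⟩
  rw [b.mem_span_image]
  intro i hi
  by_contra hiE
  apply Finsupp.mem_support_iff.mp hi
  simp [Int.mul_ediv_cancel' (h i hiE)]

theorem Finsupp.exists_triangular_seq {ι : Type*} (c : ℕ → ι →₀ ℤ) (q : ℕ → ℕ)
    (h : ∀ E : Finset ι, ∃ i ∉ E, ∃ n, ¬ (q n : ℤ) ∣ c n i) :
    ∃ (i : ℕ → ι) (n : ℕ → ℕ), Function.Injective i ∧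
      (∀ l, ¬ (q (n l) : ℤ) ∣ c (n l) (i l)) ∧ ∀ l l', l < l' → c (n l) (i l') = 0 := by
  classical
  choose idx hidx lvl hlvl using h
  let E : ℕ → Finset ι := fun l => (fun E => E ∪ (c (lvl E)).support)^[l] ∅
  have hE_succ : ∀ l, E (l + 1) = E l ∪ (c (lvl (E l))).support := fun l =>
    Function.iterate_succ_apply' _ _ _
  have hE : Monotone E := monotone_nat_of_le_succ fun l => hE_succ l ▸ Finset.subset_union_left
  have hzero : ∀ l l', l < l' → c (lvl (E l)) (idx (E l')) = 0 := by
    intro l l' hll'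
    by_contra hne
    refine hidx (E l') (hE hll' ?_)
    rw [hE_succ]
    exact Finset.mem_union_right _ (Finsupp.mem_support_iff.mpr hne)
  refine ⟨fun l => idx (E l), fun l => lvl (E l), fun l l' (hll' : idx (E l) = idx (E l')) => ?_,
    fun l => hlvl _, hzero⟩
  by_contra hne
  rcases lt_or_gt_of_ne hne with hlt | hlt
  · exact hlvl (E l) (by rw [hll', hzero l l' hlt]; exact dvd_zero _)
  · exact hlvl (E l') (by rw [← hll', hzero l' l hlt]; exact dvd_zero _)

section Extension

variable {K F ιK : Type*} [AddCommGroup K] [AddCommGroup F] (b : Module.Basis ιK ℤ K)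

/-- If all coordinates outside `E` of every `W n` were divisible by `q n`, then `x` would be
divisible by every `q n` modulo the finitely generated `S ⊔ ι (span (b '' E))`. -/
theorem exists_not_dvd_repr_of_not_mem_pureClosure [Module.Free ℤ F] (ι : K →ₗ[ℤ] F)
    {S : Submodule ℤ F} (hS : S.FG) {x : F} (hx : x ∉ pureClosure (S ⊔ LinearMap.range ι))
    {q : ℕ → ℕ} (hq : ∀ n, n < q n) {y : ℕ → F} {W : ℕ → K}
    (hW : ∀ n, q n • y n - x - ι (W n) ∈ S) (E : Finset ιK) :
    ∃ i ∉ E, ∃ n, ¬ (q n : ℤ) ∣ b.repr (W n) i := by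
  by_contra! h
  refine hx (pureClosure_mono (sup_le_sup_left (LinearMap.map_le_range (f := ι)) S)
    (mem_pureClosure_of_hasUnboundedDivisors
      (hS.sup ((fg_span (E.finite_toSet.image b)).map ι)) ?_))
  rw [hasUnboundedDivisors_mkQ_iff]
  intro n
  obtain ⟨v, hv⟩ := b.exists_sub_nsmul_mem_span_image E (q n) (W n) fun i hi => h i hi n
  refine ⟨q n, hq n, y n - ι v, ?_⟩
  have : q n • (y n - ι v) - x = (q n • y n - x - ι (W n)) + ι (W n - q n • v) := by
    simp only [smul_sub, map_sub, map_nsmul]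
    abel
  rw [this]
  exact add_mem (mem_sup_left (hW n)) (mem_sup_right (mem_map_of_mem hv))

noncomputable def Module.Basis.indicatorForm (i : ℕ → ιK) (T : Set ℕ) : K →ₗ[ℤ] ℤ :=
  b.constr ℤ (Function.extend i (T.indicator 1) 0)

theorem Module.Basis.indicatorForm_basis_mem (i : ℕ → ιK) (T : Set ℕ) (j : ιK) :
    b.indicatorForm i T (b j) ∈ ({0, 1} : Set ℤ) := by
  classical
  rw [Module.Basis.indicatorForm, b.constr_basis, Function.extend_def]
  split_ifs
  · by_cases h : Classical.choose ‹∃ l, i l = j› ∈ T <;> simp [h]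
  · simp

theorem Module.Basis.eq_of_forall_dvd_indicatorForm_sub {W : ℕ → K} {q : ℕ → ℕ} {i : ℕ → ιK}
    {n : ℕ → ℕ} (hinj : Function.Injective i)
    (hdvd : ∀ l, ¬ (q (n l) : ℤ) ∣ b.repr (W (n l)) (i l))
    (hzero : ∀ l l', l < l' → b.repr (W (n l)) (i l') = 0) {T T' : Set ℕ}
    (h : ∀ m, (q m : ℤ) ∣ b.indicatorForm i T (W m) - b.indicatorForm i T' (W m)) : T = T' := by
  classical
  by_contra hTT'
  obtain ⟨l, hl, hmin⟩ : ∃ l, ¬ (l ∈ T ↔ l ∈ T') ∧ ∀ l' < l, (l' ∈ T ↔ l' ∈ T') := by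
    have hex : ∃ l, ¬ (l ∈ T ↔ l ∈ T') := by
      by_contra! h
      exact hTT' (Set.ext h)
    exact ⟨Nat.find hex, Nat.find_spec hex, fun l' h => not_not.mp (Nat.find_min hex h)⟩
  let d : ιK → ℤ := Function.extend i (T.indicator 1) 0 - Function.extend i (T'.indicator 1) 0
  have hd : ∀ l', d (i l') = T.indicator 1 l' - T'.indicator 1 l' := by
    simp [d, hinj.extend_apply]
  have hdl : d (i l) * d (i l) = 1 := by
    rw [hd]
    by_cases hT : l ∈ T <;> by_cases hT' : l ∈ T' <;> simp_all
  have hsum : b.indicatorForm i T (W (n l)) - b.indicatorForm i T' (W (n l)) =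
      b.repr (W (n l)) (i l) * d (i l) := by
    rw [← LinearMap.sub_apply, Module.Basis.indicatorForm, Module.Basis.indicatorForm, ← map_sub,
      b.constr_apply, Finsupp.sum_eq_single (i l)]
    · rfl
    · intro j _ hj
      by_cases hr : ∃ l', i l' = j
      · obtain ⟨l', rfl⟩ := hr
        rcases lt_trichotomy l' l with hlt | rfl | hlt
        · change _ • d (i l') = 0
          rw [hd]
          by_cases hT : l' ∈ T <;> simp [hT, (hmin l' hlt).mp, mt (hmin l' hlt).mpr]
        · exact absurd rfl hj
        · rw [hzero l l' hlt, zero_smul]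
      · simp [Function.extend_apply' _ _ _ hr]
    · simp
  apply hdvd l
  have := (h (n l)).mul_right (d (i l))
  rwa [hsum, mul_assoc, hdl, mul_one] at this

end Extension

theorem not_injective_set_nat_of_countable {β : Type*} [Countable β] (f : Set ℕ → β) :
    ¬ Function.Injective f := fun hf =>
  let ⟨g, hg⟩ := Countable.exists_injective_nat β
  Function.cantor_injective (g ∘ f) (hg.comp hf)

theorem exists_zeroOne_not_extends {K F ιK : Type*} [AddCommGroup K] [AddCommGroup F]
    [Module.Free ℤ F] (b : Module.Basis ιK ℤ K) (ι : K →ₗ[ℤ] F) {S : Submodule ℤ F}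
    (hS : S.FG) {x : F} (hx : x ∉ pureClosure (S ⊔ LinearMap.range ι))
    (hdiv : HasUnboundedDivisors ((S ⊔ LinearMap.range ι).mkQ x)) :
    ∃ φ : K →ₗ[ℤ] ℤ, (∀ ψ : F →ₗ[ℤ] ℤ, ψ ∘ₗ ι ≠ φ) ∧ ∀ j, φ (b j) ∈ ({0, 1} : Set ℤ) := by
  have hdiv' : ∀ n, ∃ q : ℕ, n < q ∧ ∃ y W, q • y - x - ι W ∈ S := by
    intro n
    obtain ⟨q, hq, y, hy⟩ := hasUnboundedDivisors_mkQ_iff.mp hdiv n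
    obtain ⟨s, hs, _, ⟨W, rfl⟩, hsW⟩ := mem_sup.mp hy
    exact ⟨q, hq, y, W, by rwa [← eq_sub_of_add_eq hsW]⟩
  choose q hq y W hW using hdiv'
  obtain ⟨i, n, hinj, hdvd, hzero⟩ := Finsupp.exists_triangular_seq (fun m => b.repr (W m)) q
    (exists_not_dvd_repr_of_not_mem_pureClosure b ι hS hx hq hW)
  suffices ∃ T, ∀ ψ : F →ₗ[ℤ] ℤ, ψ ∘ₗ ι ≠ b.indicatorForm i T from
    let ⟨T, hT⟩ := this
    ⟨_, hT, b.indicatorForm_basis_mem i T⟩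
  by_contra! hext
  choose ψ hψ using hext
  obtain ⟨s, hs⟩ := hS.sup (fg_span_singleton x)
  obtain ⟨T, T', hψT, hTT'⟩ := Function.not_injective_iff.mp
    (not_injective_set_nat_of_countable fun T (g : s) => ψ T g)
  have hψS : ∀ z ∈ S ⊔ ℤ ∙ x, ψ T z = ψ T' z := by
    rw [← hs]
    exact LinearMap.eqOn_span fun g hg => congrFun hψT ⟨g, hg⟩
  refine hTT' (b.eq_of_forall_dvd_indicatorForm_sub hinj hdvd hzero fun m =>
    ⟨ψ T (y m) - ψ T' (y m), ?_⟩)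
  have hWm := hψS _ (mem_sup_left (hW m))
  have hxm := hψS x (mem_sup_right (mem_span_singleton_self x))
  rw [← hψ T, ← hψ T']
  simp only [map_sub, map_nsmul, LinearMap.comp_apply, nsmul_eq_mul] at hWm ⊢
  linear_combination -hWm - hxm

theorem stmt5_general (A K F : Type) [AddCommGroup A] [AddCommGroup K] [AddCommGroup F]
    [Countable A]
    (htf : ∀ (n : ℤ) (a : A), n ≠ 0 → n • a = 0 → a = 0)
    (hnonfree : ¬ Module.Free ℤ A)
    (hFfree : Module.Free ℤ F)
    (ιK : Type) (b : Module.Basis ιK ℤ K)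
    (ι : K →+ F) (π : F →+ A)
    (hsurj : Function.Surjective π)
    (hexact : ι.range = π.ker) :
    ∃ φ : K →+ ℤ,
      (¬ ∃ ψ : F →+ ℤ, ψ.comp ι = φ) ∧
      ∀ i : ιK, φ (b i) ∈ ({0, 1} : Set ℤ) := by
  have : Module.IsTorsionFree ℤ A :=
    .of_smul_eq_zero fun n a h => or_iff_not_imp_left.mpr fun hn => htf n a hn h
  have hrange : LinearMap.range ι.toIntLinearMap = LinearMap.ker π.toIntLinearMap :=
    SetLike.ext fun y => SetLike.ext_iff.mp hexact y
  obtain ⟨T, hT, a, ha, hdiv⟩ := exists_fg_not_mem_pureClosure_hasUnboundedDivisors hnonfree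
  obtain ⟨x, rfl⟩ := hsurj a
  obtain ⟨S, hS, hST⟩ := exists_fg_sup_ker_eq_comap π.toIntLinearMap hsurj hT
  rw [← hrange] at hST
  obtain ⟨φ, hφ, h01⟩ := exists_zeroOne_not_extends b ι.toIntLinearMap hS (x := x)
    (by rwa [hST, ← comap_pureClosure]) (by rw [hST]; exact hdiv.mkQ_comap hsurj)
  exact ⟨φ.toAddMonoidHom, fun ⟨ψ, hψ⟩ =>
    hφ ψ.toIntLinearMap (LinearMap.ext fun k => DFunLike.congr_fun hψ k), h01⟩

/-- Let `A` be a countable, torsion-free, nonfree abelian group, let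
`0 → K → F → A → 0` be a free resolution of `A` (with `K`, `F` free abelian groups,
`K` embedded in `F` via the injective map `ι`, and `π : F → A` surjective with kernel
the image of `K`), and let `b` be a basis of `K`.  Then there is a homomorphism
`φ : K → ℤ` that does not extend to any homomorphism `ψ : F → ℤ`, with
`φ t ∈ {0, 1}` for every basis element `t` of `K`. -/
theorem stmt5 (A K F : Type) [AddCommGroup A] [AddCommGroup K] [AddCommGroup F]
    [Countable A]
    (htf : ∀ (n : ℤ) (a : A), n ≠ 0 → n • a = 0 → a = 0)
    (hnonfree : ¬ Module.Free ℤ A)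
    (hFfree : Module.Free ℤ F)
    (ιK : Type) (b : Module.Basis ιK ℤ K)
    (ι : K →+ F) (π : F →+ A)
    (hinj : Function.Injective ι) (hsurj : Function.Surjective π)
    (hexact : ι.range = π.ker) :
    ∃ φ : K →+ ℤ,
      (¬ ∃ ψ : F →+ ℤ, ψ.comp ι = φ) ∧
      ∀ i : ιK, φ (b i) ∈ ({0, 1} : Set ℤ) :=
  stmt5_general A K F htf hnonfree hFfree ιK b ι π hsurj hexact
end

section
/- Let S be a profinite set presented as an inverse limit of finite discrete spaces S_i over a directed set Λ, let A and B be discrete abelian groups, and let φ : S → Hom(A, B) be continuous (Hom(A,B) with the topology inherited from the product B^A). Then for every finitely generated subgroup A₀ of A there exists i ∈ Λ and a map φ₀ : S_i → Hom(A₀, B) such that for all s ∈ S, the restriction of φ(s) to A₀ equals φ₀(π_i(s)). -/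
/-- The inverse limit of a system of spaces `F i` over a directed index `Λ`, with
transition maps `t h : F j → F i` for `h : i ≤ j`, realized as the subspace of the
product `Π i, F i` of compatible threads. -/
abbrev InvLim (Λ : Type) [Preorder Λ] (F : Λ → Type)
    (t : ∀ ⦃i j : Λ⦄, i ≤ j → F j → F i) : Type :=
  {u : ∀ i, F i // ∀ (i j : Λ) (h : i ≤ j), t h (u j) = u i}

/-!
Every open subset of `S = lim F i` contains, around each of its points, a whole fibre of a
single projection `π_j`: a basic open set constrains finitely many coordinates, and by
directedness these are all determined by one coordinate `j`. Hence for `g` continuous into a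
discrete space, the sets `V_j` of points whose `π_j`-fibre `g` maps to one value are open,
increase with `j` and cover `S`; as `S` is compact, a single `V_i` is all of `S`. Applied to
`g s = (φ s a)_{a ∈ T}` for a finite generating set `T` of `A₀`, this makes `φ s |_{A₀}` a
function of `π_i s`.
-/

open Function

namespace InvLim

variable {Λ : Type} [Preorder Λ] {F : Λ → Type} {t : ∀ ⦃i j : Λ⦄, i ≤ j → F j → F i}

theorem proj_eq_of_le {i j : Λ} (hij : i ≤ j) {s s' : InvLim Λ F t} (h : s.1 j = s'.1 j) :
    s.1 i = s'.1 i := by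
  rw [← s.2 i j hij, ← s'.2 i j hij, h]

variable [∀ i, TopologicalSpace (F i)]

theorem continuous_proj (i : Λ) : Continuous fun s : InvLim Λ F t => s.1 i :=
  (continuous_apply i).comp continuous_subtype_val

theorem isClosed_setOf_compatible [∀ i, T2Space (F i)]
    (ht : ∀ ⦃i j : Λ⦄ (h : i ≤ j), Continuous (t h)) :
    IsClosed {u : ∀ i, F i | ∀ (i j : Λ) (h : i ≤ j), t h (u j) = u i} := by
  simp only [Set.ofPred_forall]
  exact isClosed_iInter fun i => isClosed_iInter fun j => isClosed_iInter fun h =>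
    isClosed_eq ((ht h).comp (continuous_apply j)) (continuous_apply i)

theorem compactSpace [∀ i, T2Space (F i)] [∀ i, CompactSpace (F i)]
    (ht : ∀ ⦃i j : Λ⦄ (h : i ≤ j), Continuous (t h)) : CompactSpace (InvLim Λ F t) :=
  isCompact_iff_compactSpace.mp (isClosed_setOf_compatible ht).isCompact

theorem exists_proj_fiber_subset [IsDirected Λ (· ≤ ·)] [Nonempty Λ]
    {U : Set (InvLim Λ F t)} (hU : IsOpen U) {s : InvLim Λ F t} (hs : s ∈ U) :
    ∃ j, ∀ s' : InvLim Λ F t, s'.1 j = s.1 j → s' ∈ U := by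
  obtain ⟨V, hV, rfl⟩ := isOpen_induced_iff.mp hU
  obtain ⟨I, W, hsW, hWV⟩ := isOpen_pi_iff.mp hV s.1 hs
  obtain ⟨j, hj⟩ := I.exists_le
  refine ⟨j, fun s' hs' => hWV fun k hk => ?_⟩
  rw [proj_eq_of_le (hj k hk) hs']
  exact (hsW k hk).2

variable [∀ i, DiscreteTopology (F i)]

theorem exists_factorsThrough_proj [IsDirected Λ (· ≤ ·)] [Nonempty Λ]
    [CompactSpace (InvLim Λ F t)] {X : Type*} [TopologicalSpace X] [DiscreteTopology X]
    {g : InvLim Λ F t → X} (hg : Continuous g) :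
    ∃ i, FactorsThrough g fun s : InvLim Λ F t => s.1 i := by
  let V : Λ → Set (InvLim Λ F t) := fun j => {s | ∀ s', s'.1 j = s.1 j → g s' = g s}
  have hV_open (j : Λ) : IsOpen (V j) := by
    refine isOpen_iff_forall_mem_open.mpr fun s hs => ⟨{s'' | s''.1 j = s.1 j}, ?_,
      (isOpen_discrete {s.1 j}).preimage (continuous_proj j), rfl⟩
    intro s'' hs'' s' hs'
    rw [hs s' (hs'.trans hs''), hs s'' hs'']
  have hV_mono : Monotone V := fun j k hjk s hs s' hs' => hs s' (proj_eq_of_le hjk hs')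
  have hV_cover : Set.univ ⊆ ⋃ j, V j := fun s _ =>
    Set.mem_iUnion.mpr (exists_proj_fiber_subset ((isOpen_discrete {g s}).preimage hg) rfl)
  obtain ⟨i, hi⟩ := isCompact_univ.elim_directed_cover V hV_open hV_cover hV_mono.directed_le
  exact ⟨i, fun s s' h => hi (Set.mem_univ s') s h⟩

end InvLim

theorem AddMonoidHom.comp_closure_subtype_eq {A B : Type*} [AddGroup A] [AddMonoid B]
    {f f' : A →+ B} {T : Set A} (h : Set.EqOn f f' T) :
    f.comp (AddSubgroup.closure T).subtype = f'.comp (AddSubgroup.closure T).subtype :=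
  AddMonoidHom.ext fun a => AddMonoidHom.eqOn_closure h a.2

theorem stmt10_general (Λ : Type) [Preorder Λ] [IsDirected Λ (· ≤ ·)] [Nonempty Λ]
    (F : Λ → Type) [∀ i, Finite (F i)]
    [∀ i, TopologicalSpace (F i)] [∀ i, DiscreteTopology (F i)]
    (t : ∀ ⦃i j : Λ⦄, i ≤ j → F j → F i)
    (A B : Type) [AddCommGroup A] [AddCommGroup B]
    [TopologicalSpace B] [DiscreteTopology B]
    (φ : InvLim Λ F t → (A →+ B))
    (hφ : Continuous fun s : InvLim Λ F t => (⇑(φ s) : A → B))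
    (A₀ : AddSubgroup A) (hA₀ : A₀.FG) :
    ∃ (i : Λ) (φ₀ : F i → (↥A₀ →+ B)),
      ∀ s : InvLim Λ F t, (φ s).comp A₀.subtype = φ₀ (s.1 i) := by
  obtain ⟨T, rfl⟩ := hA₀
  have := InvLim.compactSpace (t := t) fun _ _ _ => continuous_of_discreteTopology
  have hg : Continuous fun s (a : T) => φ s a :=
    continuous_pi fun a => (continuous_apply a.1).comp hφ
  obtain ⟨i, hi⟩ := InvLim.exists_factorsThrough_proj hg
  have hfactor : FactorsThrough (fun s => (φ s).comp (AddSubgroup.closure (T : Set A)).subtype)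
      fun s : InvLim Λ F t => s.1 i :=
    fun s s' h => AddMonoidHom.comp_closure_subtype_eq fun a ha => congrFun (hi h) ⟨a, ha⟩
  exact ⟨i, extend (fun s => s.1 i) (fun s => (φ s).comp _) 0,
    fun s => (hfactor.extend_apply 0 s).symm⟩

/-- Let `S` be a profinite set presented as an inverse limit of finite discrete
spaces `F i` over a directed set `Λ`, let `A` and `B` be discrete abelian groups,
and let `φ : S → Hom(A, B)` be continuous, where `Hom(A, B)` carries the topology
inherited from the product `B^A` (so continuity is that of `s ↦ (φ s : A → B)`).
Then for every finitely generated subgroup `A₀` of `A` there are `i ∈ Λ` and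
`φ₀ : F i → Hom(A₀, B)` such that the restriction of `φ s` to `A₀` equals
`φ₀ (π_i s)` for all `s ∈ S`. -/
theorem stmt10 (Λ : Type) [Preorder Λ] [IsDirected Λ (· ≤ ·)] [Nonempty Λ]
    (F : Λ → Type) [∀ i, Finite (F i)]
    [∀ i, TopologicalSpace (F i)] [∀ i, DiscreteTopology (F i)]
    (t : ∀ ⦃i j : Λ⦄, i ≤ j → F j → F i)
    (ht_id : ∀ (i : Λ) (h : i ≤ i) (x : F i), t h x = x)
    (ht_comp : ∀ ⦃i j k : Λ⦄ (hij : i ≤ j) (hjk : j ≤ k) (x : F k),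
      t hij (t hjk x) = t (le_trans hij hjk) x)
    (A B : Type) [AddCommGroup A] [AddCommGroup B]
    [TopologicalSpace B] [DiscreteTopology B]
    (φ : InvLim Λ F t → (A →+ B))
    (hφ : Continuous fun s : InvLim Λ F t => (⇑(φ s) : A → B))
    (A₀ : AddSubgroup A) (hA₀ : A₀.FG) :
    ∃ (i : Λ) (φ₀ : F i → (↥A₀ →+ B)),
      ∀ s : InvLim Λ F t, (φ s).comp A₀.subtype = φ₀ (s.1 i) :=
  stmt10_general Λ F t A B φ hφ A₀ hA₀
end

section
/- Let A' be a free abelian subgroup of an abelian group A with basis B', let F_{A'} be the free abelian group on generators {ā : a ∈ A'} with K_{A'} the kernel of the canonical surjection F_{A'} → A' sending ā to a, let S be a topological space, let φ : S → Hom(K_{A'}, ℤ) be continuous, and let f : S → ℤ^{B'} be continuous (ℤ discrete, product topology). Then there is a unique continuous map ψ' : S → Hom(F_{A'}, ℤ) such that for all s ∈ S and b ∈ B', ψ'(s)(b̄) = f(s)(b), and for all s ∈ S, ψ'(s) restricted to K_{A'} equals φ(s) restricted to K_{A'}. -/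
/-!
A section `σ` of `π : F_{A'} → A'` (sending `b i` to `b̄ᵢ`, which exists because `A'` is free)
splits `F_{A'}` as `K_{A'} ⊕ σ(A')`, so a homomorphism `F_{A'} → ℤ` is the same as a pair
consisting of its restriction to `K_{A'}` and its values on the `b̄ᵢ`. Explicitly
`ψ s x = φ s (x - σ (π x)) + Σᵢ (b.repr (π x)) i * f s i`, and each such value is a finite
combination of values of `φ` and `f`, hence continuous in `s`.
-/

namespace LinearMap

variable {R F M N : Type*} [Ring R] [AddCommGroup F] [Module R F] [AddCommGroup M] [Module R M]
  [AddCommGroup N] [Module R N] (π : F →ₗ[R] M) {σ : M →ₗ[R] F}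

def kerProjOfSection (hσ : ∀ m, π (σ m) = m) : F →ₗ[R] ker π :=
  (id - σ ∘ₗ π).codRestrict (ker π) fun x => by simp [hσ]

@[simp]
theorem coe_kerProjOfSection_apply (hσ : ∀ m, π (σ m) = m) (x : F) :
    (kerProjOfSection π hσ x : F) = x - σ (π x) :=
  rfl

def liftOfSection (hσ : ∀ m, π (σ m) = m) (φ : ker π →ₗ[R] N) (g : M →ₗ[R] N) : F →ₗ[R] N :=
  φ ∘ₗ kerProjOfSection π hσ + g ∘ₗ π

theorem liftOfSection_apply (hσ : ∀ m, π (σ m) = m) (φ : ker π →ₗ[R] N) (g : M →ₗ[R] N)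
    (x : F) : liftOfSection π hσ φ g x = φ (kerProjOfSection π hσ x) + g (π x) :=
  rfl

theorem liftOfSection_apply_of_mem_ker (hσ : ∀ m, π (σ m) = m) (φ : ker π →ₗ[R] N)
    (g : M →ₗ[R] N) {x : F} (hx : x ∈ ker π) : liftOfSection π hσ φ g x = φ ⟨x, hx⟩ := by
  have hx' : π x = 0 := hx
  have : kerProjOfSection π hσ x = ⟨x, hx⟩ := Subtype.ext (by simp [hx'])
  rw [liftOfSection_apply, this, hx', map_zero, add_zero]

theorem liftOfSection_apply_section (hσ : ∀ m, π (σ m) = m) (φ : ker π →ₗ[R] N)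
    (g : M →ₗ[R] N) (m : M) : liftOfSection π hσ φ g (σ m) = g m := by
  have : kerProjOfSection π hσ (σ m) = 0 := Subtype.ext (by simp [hσ])
  rw [liftOfSection_apply, this, map_zero, zero_add, hσ]

theorem ext_of_section (hσ : ∀ m, π (σ m) = m) {ψ₁ ψ₂ : F →ₗ[R] N}
    (hker : ∀ x ∈ ker π, ψ₁ x = ψ₂ x) (hsec : ψ₁ ∘ₗ σ = ψ₂ ∘ₗ σ) : ψ₁ = ψ₂ := by
  ext x
  have hx : x - σ (π x) ∈ ker π := (kerProjOfSection π hσ x).2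
  calc ψ₁ x = ψ₁ (x - σ (π x)) + (ψ₁ ∘ₗ σ) (π x) := by simp
    _ = ψ₂ (x - σ (π x)) + (ψ₂ ∘ₗ σ) (π x) := by rw [hker _ hx, hsec]
    _ = ψ₂ x := by simp

end LinearMap

theorem Module.Basis.continuous_constr_apply {ι R S M N : Type*} [Semiring R] [Semiring S]
    [AddCommMonoid M] [Module R M] [AddCommMonoid N] [Module R N] [Module S N]
    [SMulCommClass R S N] [TopologicalSpace N] [ContinuousAdd N] [ContinuousConstSMul R N]
    (b : Module.Basis ι R M) (m : M) : Continuous fun v : ι → N => b.constr S v m := by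
  simp only [Module.Basis.constr_apply, Finsupp.sum]
  exact continuous_finsetSum _ fun i _ => (continuous_apply i).const_smul _

/-- Let `A'` be a free abelian subgroup of an abelian group `A` with basis `b`
indexed by `ι`, let `F_{A'} = ↥A' →₀ ℤ` be the free abelian group on the generators
`ā` (`a ∈ A'`), and let `π : F_{A'} → A'` be the canonical surjection sending each
generator `ā = Finsupp.single a 1` to `a`, with kernel `K_{A'} = ker π`.  Let `S`
be a topological space, `φ : S → Hom(K_{A'}, ℤ)` continuous and `f : S → ℤ^{B'}`
continuous (`ℤ` discrete, Hom groups with the topology of the ambient products).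
Then there is a unique continuous `ψ : S → Hom(F_{A'}, ℤ)` with `ψ s (b̄ᵢ) = f s i`
for all `s, i`, and `ψ s` restricted to `K_{A'}` equal to `φ s` for all `s`. -/
theorem stmt11 (A : Type) [AddCommGroup A] (A' : AddSubgroup A)
    (ι : Type) (b : Module.Basis ι ℤ ↥A')
    (S : Type) [TopologicalSpace S]
    (π : (↥A' →₀ ℤ) →ₗ[ℤ] ↥A')
    (hπ : ∀ a : ↥A', π (Finsupp.single a 1) = a)
    (φ : S → (↥(LinearMap.ker π) →+ ℤ))
    (hφ : Continuous fun s : S => (⇑(φ s) : ↥(LinearMap.ker π) → ℤ))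
    (f : S → ι → ℤ) (hf : Continuous f) :
    ∃! ψ : S → ((↥A' →₀ ℤ) →+ ℤ),
      (∀ (s : S) (i : ι), ψ s (Finsupp.single (b i) 1) = f s i) ∧
      (∀ (s : S) (x : ↥A' →₀ ℤ) (hx : x ∈ LinearMap.ker π),
        ψ s x = φ s ⟨x, hx⟩) ∧
      Continuous fun s : S => (⇑(ψ s) : (↥A' →₀ ℤ) → ℤ) := by
  set σ := b.constr ℤ fun i => Finsupp.single (b i) (1 : ℤ)
  have hσb (i : ι) : σ (b i) = Finsupp.single (b i) 1 := b.constr_basis ℤ _ i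
  have hσ (a : ↥A') : π (σ a) = a :=
    LinearMap.congr_fun (b.ext (f₁ := π ∘ₗ σ) (f₂ := LinearMap.id) fun i => by simp [hσb, hπ]) a
  let Ψ s := LinearMap.liftOfSection π hσ (φ s).toIntLinearMap (b.constr ℤ (f s))
  have hΨb (s : S) (i : ι) : Ψ s (Finsupp.single (b i) 1) = f s i := by
    rw [← hσb, LinearMap.liftOfSection_apply_section, b.constr_basis]
  have hΨker (s : S) (x : ↥A' →₀ ℤ) (hx : x ∈ LinearMap.ker π) : Ψ s x = φ s ⟨x, hx⟩ :=
    LinearMap.liftOfSection_apply_of_mem_ker π hσ _ _ hx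
  refine ⟨fun s => (Ψ s).toAddMonoidHom, ⟨hΨb, hΨker, ?_⟩, ?_⟩
  · refine continuous_pi fun x => ?_
    exact ((continuous_apply _).comp hφ).add ((b.continuous_constr_apply (S := ℤ) (π x)).comp hf)
  · rintro ψ' ⟨hψ'b, hψ'ker, -⟩
    funext s
    refine AddMonoidHom.toIntLinearMap_injective (LinearMap.ext_of_section π hσ ?_ ?_)
    · intro x hx
      exact (hψ'ker s x hx).trans (hΨker s x hx).symm
    · refine b.ext fun i => ?_
      simp only [LinearMap.comp_apply, hσb]
      exact (hψ'b s i).trans (hΨb s i).symm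
end

section
/- Let X be a compact Hausdorff space with τ_c its collection of closed subsets, let B be a complete Boolean algebra with Stone space S, and suppose ⟨b_D : D ∈ τ_c⟩ are elements of B such that for all closed D₀, D₁: b_{D₀∩D₁} = b_{D₀} ∧ b_{D₁}, and whenever D₀ ∪ D₁ = X then b_{D₀} ∨ b_{D₁} = 1, and b_∅ = 0. Then for every ultrafilter U on B, the intersection ⋂{D ∈ τ_c : b_D ∈ U} contains exactly one point, and the resulting map f : S → X is continuous. -/
/-- The Stone space of a Boolean algebra `B`: its points are the ultrafilters on `B`,
encoded as bounded lattice homomorphisms `B → Bool`, with the topology generated by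
the basic clopen sets `N_b = {U : U b = true}`. -/
instance stoneTopology (B : Type) [BooleanAlgebra B] :
    TopologicalSpace (BoundedLatticeHom B Bool) :=
  TopologicalSpace.generateFrom
    {s | ∃ b : B, s = {U : BoundedLatticeHom B Bool | U b = true}}

/-!
The closed sets `D` with `b_D ∈ U` form a family closed under finite intersections and
not containing `∅`, so by compactness it has nonempty intersection. Two distinct points
have disjoint open neighbourhoods `V, W`; since `Vᶜ ∪ Wᶜ = X`, one of `b_{Vᶜ}, b_{Wᶜ}`
lies in `U`, which separates the points, so the intersection is a singleton `{f U}`.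
The same covering argument applied to `(interior s)ᶜ ∪ s = X`, for a closed
neighbourhood `s` of `f U`, puts `b_s` in `U`, and then the basic open set `N_{b_s}` is
mapped into `s`: this is continuity of `f`.
-/

theorem isOpen_setOf_apply_eq_true {B : Type} [BooleanAlgebra B] (b : B) :
    IsOpen {U : BoundedLatticeHom B Bool | U b = true} :=
  TopologicalSpace.isOpen_generateFrom_of_mem ⟨b, rfl⟩

section ClosedSetNames

variable {B : Type*} [Lattice B] [BoundedOrder B] {X : Type*} [TopologicalSpace X]

def closedFamily (bD : Set X → B) (U : BoundedLatticeHom B Bool) : Set (Set X) :=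
  {D | IsClosed D ∧ U (bD D) = true}

theorem mem_sInter_closedFamily {bD : Set X → B} {U : BoundedLatticeHom B Bool} {x : X} :
    x ∈ ⋂₀ closedFamily bD U ↔ ∀ D : Set X, IsClosed D → U (bD D) = true → x ∈ D := by
  simp only [Set.mem_sInter, closedFamily, Set.mem_ofPred_eq, and_imp]

theorem apply_eq_true_or_apply_eq_true_of_union_eq_univ {bD : Set X → B}
    (hcov : ∀ D₀ D₁ : Set X, IsClosed D₀ → IsClosed D₁ → D₀ ∪ D₁ = Set.univ →
      bD D₀ ⊔ bD D₁ = ⊤)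
    (U : BoundedLatticeHom B Bool) {D₀ D₁ : Set X} (h₀ : IsClosed D₀) (h₁ : IsClosed D₁)
    (hunion : D₀ ∪ D₁ = Set.univ) :
    U (bD D₀) = true ∨ U (bD D₁) = true := by
  simpa [map_sup] using congrArg U (hcov D₀ D₁ h₀ h₁ hunion)

theorem sInter_closedFamily_nonempty [CompactSpace X] {bD : Set X → B}
    (hmeet : ∀ D₀ D₁ : Set X, IsClosed D₀ → IsClosed D₁ →
      bD (D₀ ∩ D₁) = bD D₀ ⊓ bD D₁)
    (hcov : ∀ D₀ D₁ : Set X, IsClosed D₀ → IsClosed D₁ → D₀ ∪ D₁ = Set.univ →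
      bD D₀ ⊔ bD D₁ = ⊤)
    (hempty : bD ∅ = ⊥) (U : BoundedLatticeHom B Bool) :
    (⋂₀ closedFamily bD U).Nonempty := by
  have huniv : Set.univ ∈ closedFamily bD U :=
    ⟨isClosed_univ, by
      simpa using apply_eq_true_or_apply_eq_true_of_union_eq_univ hcov U isClosed_univ
        isClosed_univ (Set.union_self _)⟩
  have : Nonempty (closedFamily bD U) := ⟨⟨_, huniv⟩⟩
  refine IsCompact.nonempty_sInter_of_directed_nonempty_isCompact_isClosed ?_ ?_
    (fun D hD => hD.1.isCompact) (fun D hD => hD.1)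
  · rintro D₀ ⟨hD₀, hU₀⟩ D₁ ⟨hD₁, hU₁⟩
    refine ⟨D₀ ∩ D₁, ⟨hD₀.inter hD₁, ?_⟩, Set.inter_subset_left, Set.inter_subset_right⟩
    simp [hmeet D₀ D₁ hD₀ hD₁, map_inf, hU₀, hU₁]
  · rintro D ⟨-, hUD⟩
    rw [Set.nonempty_iff_ne_empty]
    rintro rfl
    simp [hempty] at hUD

theorem sInter_closedFamily_subsingleton [T2Space X] {bD : Set X → B}
    (hcov : ∀ D₀ D₁ : Set X, IsClosed D₀ → IsClosed D₁ → D₀ ∪ D₁ = Set.univ →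
      bD D₀ ⊔ bD D₁ = ⊤)
    (U : BoundedLatticeHom B Bool) :
    (⋂₀ closedFamily bD U).Subsingleton := by
  intro x hx y hy
  by_contra hxy
  obtain ⟨V, W, hV, hW, hxV, hyW, hVW⟩ := t2_separation hxy
  have hunion : Vᶜ ∪ Wᶜ = Set.univ := by
    rw [← Set.compl_inter, hVW.inter_eq, Set.compl_empty]
  rcases apply_eq_true_or_apply_eq_true_of_union_eq_univ hcov U hV.isClosed_compl
    hW.isClosed_compl hunion with h | h
  · exact mem_sInter_closedFamily.mp hx _ hV.isClosed_compl h hxV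
  · exact mem_sInter_closedFamily.mp hy _ hW.isClosed_compl h hyW

end ClosedSetNames

theorem continuous_of_mem_sInter_closedFamily {B : Type} [BooleanAlgebra B] {X : Type*}
    [TopologicalSpace X] [RegularSpace X] {bD : Set X → B}
    (hcov : ∀ D₀ D₁ : Set X, IsClosed D₀ → IsClosed D₁ → D₀ ∪ D₁ = Set.univ →
      bD D₀ ⊔ bD D₁ = ⊤)
    {f : BoundedLatticeHom B Bool → X} (hf : ∀ U, f U ∈ ⋂₀ closedFamily bD U) :
    Continuous f := by
  refine continuous_iff_continuousAt.mpr fun U =>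
    (closed_nhds_basis (f U)).tendsto_right_iff.mpr ?_
  rintro s ⟨hs, hs_closed⟩
  have hinterior : (interior s)ᶜ ∪ s = Set.univ :=
    Set.eq_univ_of_forall fun z => (em' (z ∈ interior s)).imp id (interior_subset ·)
  have hUs : U (bD s) = true :=
    (apply_eq_true_or_apply_eq_true_of_union_eq_univ hcov U isOpen_interior.isClosed_compl
      hs_closed hinterior).resolve_left fun h =>
        mem_sInter_closedFamily.mp (hf U) _ isOpen_interior.isClosed_compl h
          (mem_interior_iff_mem_nhds.mpr hs)
  filter_upwards [(isOpen_setOf_apply_eq_true (bD s)).mem_nhds hUs] with U' hU'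
  exact mem_sInter_closedFamily.mp (hf U') s hs_closed hU'

/-- Let `X` be a compact Hausdorff space, `B` a complete Boolean algebra with Stone
space `S`, and `bD : D ↦ ⟦D ∈ Ḟ⟧` an assignment of elements of `B` to (closed)
subsets of `X` such that `bD (D₀ ∩ D₁) = bD D₀ ⊓ bD D₁` for closed `D₀, D₁`,
`bD D₀ ⊔ bD D₁ = ⊤` whenever `D₀ ∪ D₁ = X` are closed, and `bD ∅ = ⊥`.  Then for
every ultrafilter `U` on `B` the intersection `⋂ {D closed : bD D ∈ U}` contains
exactly one point, and the resulting map `f : S → X` is continuous. -/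
theorem stmt13 (B : Type) [CompleteBooleanAlgebra B]
    (X : Type) [TopologicalSpace X] [CompactSpace X] [T2Space X]
    (bD : Set X → B)
    (hmeet : ∀ D₀ D₁ : Set X, IsClosed D₀ → IsClosed D₁ →
      bD (D₀ ∩ D₁) = bD D₀ ⊓ bD D₁)
    (hcov : ∀ D₀ D₁ : Set X, IsClosed D₀ → IsClosed D₁ → D₀ ∪ D₁ = Set.univ →
      bD D₀ ⊔ bD D₁ = ⊤)
    (hempty : bD ∅ = ⊥) :
    (∀ U : BoundedLatticeHom B Bool,
      ∃! x : X, ∀ D : Set X, IsClosed D → U (bD D) = true → x ∈ D) ∧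
    ∃ f : BoundedLatticeHom B Bool → X, Continuous f ∧
      ∀ (U : BoundedLatticeHom B Bool) (D : Set X),
        IsClosed D → U (bD D) = true → f U ∈ D := by
  have hpoint : ∀ U : BoundedLatticeHom B Bool, ∃! x : X, x ∈ ⋂₀ closedFamily bD U := fun U =>
    let ⟨x, hx⟩ := sInter_closedFamily_nonempty hmeet hcov hempty U
    ⟨x, hx, fun _ hy => sInter_closedFamily_subsingleton hcov U hy hx⟩
  choose f hf using fun U => (hpoint U).exists
  refine ⟨fun U => ?_, f, continuous_of_mem_sInter_closedFamily hcov hf,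
    fun U => mem_sInter_closedFamily.mp (hf U)⟩
  simpa only [mem_sInter_closedFamily] using hpoint U
end

section
/- If A is a nonfree abelian group of cardinality κ, then Ext^1(A, ℤ^{(κ)}) ≠ 0, where ℤ^{(κ)} denotes the free abelian group on κ generators (direct sum of κ copies of ℤ). -/
/-!
Write `A` as a quotient `F → A` of `F = ℤ^{(ι)}` with kernel `K`. Submodules of free modules over
a PID are free, and more precisely `K` has a basis indexed by a subset of `ι`: well-order `ι` and,
for each `i`, pick an element of `K` supported in `(-∞, i]` whose `i`-th coefficient generates the
ideal of all such coefficients. Hence `0 → K → F → A → 0` is a projective resolution, and `K` is a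
retract of `F`. Vanishing of `Ext¹(A, F)` says that every map `K → F` extends along `K ↪ F`;
extending the embedding of `K` as a retract yields a retraction `F → K`. So `A` is isomorphic to a
complement of `K` in `F`, a submodule of a free module, hence free.
-/

open CategoryTheory Opposite

/-- The first Ext group `Ext¹(A, B)` computed in the category of abelian groups
(ℤ-modules). -/
noncomputable abbrev Ext1 (A B : Type) [AddCommGroup A] [AddCommGroup B] : Type :=
  ↥(((Ext ℤ (ModuleCat ℤ) 1).obj (op (ModuleCat.of ℤ A))).obj (ModuleCat.of ℤ B))

open Finsupp Submodule.IsPrincipal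

namespace Submodule

variable {R ι : Type*} [CommRing R] [IsPrincipalIdealRing R]

namespace FinsuppBasis

variable [LinearOrder ι] (N : Submodule R (ι →₀ R))

noncomputable def leadingIdeal (i : ι) : Ideal R :=
  (N ⊓ supported R R (Set.Iic i)).map (lapply i)

noncomputable def leadingCoeff (i : ι) : R := generator (leadingIdeal N i)

lemma exists_leadingCoeff (i : ι) :
    ∃ y ∈ N ⊓ supported R R (Set.Iic i), y i = leadingCoeff N i :=
  mem_map.mp (generator_mem (leadingIdeal N i))

noncomputable def leadingElem (i : ι) : ι →₀ R := (exists_leadingCoeff N i).choose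

lemma leadingElem_mem (i : ι) : leadingElem N i ∈ N ⊓ supported R R (Set.Iic i) :=
  (exists_leadingCoeff N i).choose_spec.1

lemma leadingElem_apply_self (i : ι) : leadingElem N i i = leadingCoeff N i :=
  (exists_leadingCoeff N i).choose_spec.2

lemma leadingElem_apply_of_lt {i j : ι} (h : i < j) : leadingElem N i j = 0 :=
  notMem_support_iff.mp fun hj ↦ (not_le.mpr h) ((mem_supported R _).mp (leadingElem_mem N i).2 hj)

def leadingIndices : Set ι := {i | leadingCoeff N i ≠ 0}

lemma linearIndependent_leadingElem [IsDomain R] :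
    LinearIndependent R (fun i : leadingIndices N ↦ leadingElem N i) := by
  rw [linearIndependent_iff]
  intro l hl
  by_contra hl0
  obtain ⟨m, hm, hmax⟩ := l.support.exists_max_image Subtype.val (support_nonempty_iff.mpr hl0)
  have hm0 : (linearCombination R (fun i : leadingIndices N ↦ leadingElem N i) l) m = 0 := by
    simp [hl]
  rw [linearCombination_apply, Finsupp.sum, finsetSum_apply,
    Finset.sum_eq_single m (fun t ht htm ↦ ?_) (fun h ↦ absurd hm h), Finsupp.smul_apply,
    smul_eq_mul, leadingElem_apply_self] at hm0
  · exact mul_ne_zero (mem_support_iff.mp hm) m.2 hm0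
  · rw [Finsupp.smul_apply, leadingElem_apply_of_lt N (lt_of_le_of_ne (hmax t ht)
      (Subtype.coe_injective.ne htm)), smul_zero]

lemma mem_span_leadingElem_of_mem_supported_Iic [WellFoundedLT ι] (i : ι) :
    ∀ x ∈ N ⊓ supported R R (Set.Iic i),
      x ∈ span R (Set.range fun j : leadingIndices N ↦ leadingElem N j) := by
  induction i using WellFoundedLT.induction with
  | _ i IH =>
  set V := span R (Set.range fun j : leadingIndices N ↦ leadingElem N j)
  have mem_of_apply_eq_zero : ∀ z ∈ N ⊓ supported R R (Set.Iic i), z i = 0 → z ∈ V := by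
    intro z ⟨hzN, hz⟩ hzi
    rcases eq_or_ne z 0 with rfl | hz0
    · exact zero_mem _
    have hne := support_nonempty_iff.mpr hz0
    refine IH _ (lt_of_le_of_ne (hz (z.support.max'_mem hne)) fun h ↦ ?_) z
      ⟨hzN, fun k hk ↦ z.support.le_max' k hk⟩
    exact mem_support_iff.mp (z.support.max'_mem hne) (h ▸ hzi)
  have hy : leadingElem N i ∈ V := by
    by_cases hi : leadingCoeff N i = 0
    · exact mem_of_apply_eq_zero _ (leadingElem_mem N i) (by rw [leadingElem_apply_self, hi])
    · exact subset_span ⟨⟨i, hi⟩, rfl⟩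
  intro x hx
  obtain ⟨c, hc⟩ := (mem_iff_eq_smul_generator (leadingIdeal N i)).mp ⟨x, hx, rfl⟩
  have hxi : x i = c * leadingCoeff N i := hc
  have hx' : x - c • leadingElem N i ∈ V :=
    mem_of_apply_eq_zero _ (sub_mem hx (smul_mem _ c (leadingElem_mem N i)))
      (by simp [leadingElem_apply_self, hxi])
  simpa using add_mem hx' (smul_mem V c hy)

lemma span_leadingElem [WellFoundedLT ι] :
    span R (Set.range fun j : leadingIndices N ↦ leadingElem N j) = N := by
  refine le_antisymm (span_le.mpr ?_) fun x hx ↦ ?_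
  · rintro _ ⟨j, rfl⟩
    exact (leadingElem_mem N j).1
  rcases eq_or_ne x 0 with rfl | hx0
  · exact zero_mem _
  have hne := support_nonempty_iff.mpr hx0
  exact mem_span_leadingElem_of_mem_supported_Iic N (x.support.max' hne) x
    ⟨hx, fun k hk ↦ x.support.le_max' k hk⟩

end FinsuppBasis

section

variable [IsDomain R]

theorem exists_set_basis_finsupp (N : Submodule R (ι →₀ R)) :
    ∃ S : Set ι, Nonempty (Module.Basis S R N) := by
  obtain ⟨_, _⟩ := exists_wellFoundedLT ι
  exact ⟨_, ⟨(Module.Basis.span (FinsuppBasis.linearIndependent_leadingElem N)).map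
    (LinearEquiv.ofEq _ _ (FinsuppBasis.span_leadingElem N))⟩⟩

theorem free_of_finsupp (N : Submodule R (ι →₀ R)) : Module.Free R N :=
  let ⟨_, ⟨b⟩⟩ := exists_set_basis_finsupp N
  .of_basis b

theorem exists_retract_finsupp (N : Submodule R (ι →₀ R)) :
    ∃ (e : N →ₗ[R] ι →₀ R) (r : (ι →₀ R) →ₗ[R] N), r ∘ₗ e = LinearMap.id := by
  obtain ⟨S, ⟨b⟩⟩ := exists_set_basis_finsupp N
  refine ⟨lmapDomain R R Subtype.val ∘ₗ (b.repr : N →ₗ[R] S →₀ R),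
    (b.repr.symm : (S →₀ R) →ₗ[R] N) ∘ₗ lcomapDomain Subtype.val Subtype.val_injective, ?_⟩
  ext x
  simp [comapDomain_mapDomain]

end

end Submodule

open Limits ZeroObject

namespace CategoryTheory.ShortComplex

variable {C : Type*} [Category* C] [Abelian C] (S : ShortComplex C)

noncomputable def twoTermX : ℕ → C
  | 0 => S.X₂
  | 1 => S.X₁
  | _ + 2 => 0

noncomputable def twoTermD : ∀ n, twoTermX S (n + 1) ⟶ twoTermX S n
  | 0 => S.f
  | _ + 1 => 0

noncomputable def twoTermComplex : ChainComplex C ℕ :=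
  ChainComplex.of (twoTermX S) (twoTermD S) (fun _ => zero_comp)

lemma twoTermComplex_d_one_zero : S.twoTermComplex.d 1 0 = S.f :=
  ChainComplex.of_d (twoTermX S) (twoTermD S) 0

lemma isZero_twoTermComplex_X (n : ℕ) : IsZero (S.twoTermComplex.X (n + 2)) :=
  isZero_zero C

noncomputable def twoTermπ : S.twoTermComplex ⟶ (ChainComplex.single₀ C).obj S.X₃ :=
  (ChainComplex.toSingle₀Equiv _ _).symm ⟨S.g, by rw [twoTermComplex_d_one_zero]; exact S.zero⟩

lemma twoTermπ_f_zero : S.twoTermπ.f 0 = S.g :=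
  ChainComplex.toSingle₀Equiv_symm_apply_f_zero _ _

variable {S}

lemma ShortExact.quasiIso_twoTermπ (hS : S.ShortExact) : _root_.QuasiIso S.twoTermπ where
  quasiIsoAt
  | 0 => by
    rw [ChainComplex.quasiIsoAt₀_iff, ShortComplex.quasiIso_iff_of_zeros' _
      (S.twoTermComplex.shape 0 0 (by simp))
      ((HomologicalComplex.isZero_single_obj_X (ComplexShape.down ℕ) 0 S.X₃ 1
        one_ne_zero).eq_of_src _ _)
      (((ChainComplex.single₀ C).obj S.X₃).shape 0 0 (by simp))]
    have := hS.epi_g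
    refine (ShortComplex.exact_and_epi_g_iff_of_iso ?_).2 ⟨hS.exact, this⟩
    refine ShortComplex.isoMk (Iso.refl _) (Iso.refl _) (Iso.refl _) ?_ ?_
    · exact (Category.id_comp _).trans
        ((twoTermComplex_d_one_zero S).symm.trans (Category.comp_id _).symm)
    · exact (Category.id_comp _).trans
        ((twoTermπ_f_zero S).symm.trans (Category.comp_id _).symm)
  | n + 1 => by
    rw [quasiIsoAt_iff_exactAt' (hL := ChainComplex.exactAt_succ_single_obj ..),
      HomologicalComplex.exactAt_iff' _ (n + 2) (n + 1) n (by simp) (by simp)]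
    match n with
    | 0 =>
      have := hS.mono_f
      rw [ShortComplex.exact_iff_mono _ ((S.isZero_twoTermComplex_X 0).eq_of_src _ _)]
      simpa [twoTermComplex_d_one_zero]
    | n + 1 => exact ShortComplex.exact_of_isZero_X₂ _ (S.isZero_twoTermComplex_X n)

noncomputable def ShortExact.projectiveResolution (hS : S.ShortExact) [Projective S.X₁]
    [Projective S.X₂] : ProjectiveResolution S.X₃ where
  complex := S.twoTermComplex
  projective
  | 0 => ‹Projective S.X₂›
  | 1 => ‹Projective S.X₁›
  | _ + 2 => Projective.zero_projective
  π := S.twoTermπ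
  quasiIso := hS.quasiIso_twoTermπ

lemma ShortExact.exists_comp_eq_of_subsingleton_ext (R : Type*) [Ring R] [Linear R C]
    [EnoughProjectives C] (hS : S.ShortExact) [Projective S.X₁] [Projective S.X₂] {Y : C}
    [Subsingleton ((((Ext R C 1).obj (Opposite.op S.X₃)).obj Y) : Type _)] (g : S.X₁ ⟶ Y) :
    ∃ h : S.X₂ ⟶ Y, S.f ≫ h = g := by
  set L := S.twoTermComplex.linearYonedaObj R Y
  have hL : L.ExactAt 1 := by
    rw [HomologicalComplex.exactAt_iff_isZero_homology]
    exact (ModuleCat.isZero_of_subsingleton _).of_iso (hS.projectiveResolution.isoExt 1 Y).symm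
  rw [HomologicalComplex.exactAt_iff' _ 0 1 2 (by simp) (by simp),
    ShortComplex.moduleCat_exact_iff] at hL
  have hL₂ : Subsingleton (L.X 2) := ⟨(S.isZero_twoTermComplex_X 0).eq_of_src⟩
  obtain ⟨h, hh⟩ := hL g (hL₂.elim _ _)
  refine ⟨h, ?_⟩
  rw [← twoTermComplex_d_one_zero]
  exact hh

end CategoryTheory.ShortComplex

namespace Module

open LinearMap

theorem free_of_retraction_ker {R ι A : Type*} [CommRing R] [IsDomain R]
    [IsPrincipalIdealRing R] [AddCommGroup A] [Module R A] {f : (ι →₀ R) →ₗ[R] A}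
    (hf : Function.Surjective f) (ρ : (ι →₀ R) →ₗ[R] ker f) (hρ : ∀ x : ker f, ρ x = x) :
    Module.Free R A :=
  have := (ker ρ).free_of_finsupp
  .of_equiv (((ker f).quotientEquivOfIsCompl _ (isCompl_of_proj hρ)).symm.trans
    (f.quotKerEquivOfSurjective hf))

universe u

theorem free_of_subsingleton_ext_one {R ι A : Type u} [CommRing R] [IsDomain R]
    [IsPrincipalIdealRing R] [AddCommGroup A] [Module R A] {f : (ι →₀ R) →ₗ[R] A}
    (hf : Function.Surjective f)
    (hExt : Subsingleton ((((Ext R (ModuleCat.{u} R) 1).obj (op (ModuleCat.of R A))).obj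
      (ModuleCat.of R (ι →₀ R))) : Type u)) :
    Module.Free R A := by
  obtain ⟨S, ⟨b⟩⟩ := (ker f).exists_set_basis_finsupp
  have : CategoryTheory.Projective (ModuleCat.of R (ker f)) :=
    ModuleCat.projective_of_free (M := ModuleCat.of R (ker f)) b
  have : CategoryTheory.Projective (ModuleCat.of R (ι →₀ R)) :=
    ModuleCat.projective_of_free Finsupp.basisSingleOne
  obtain ⟨e, r, hre⟩ := (ker f).exists_retract_finsupp
  obtain ⟨h, hh⟩ := (f.shortExact_shortComplexKer hf).exists_comp_eq_of_subsingleton_ext R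
    (ModuleCat.ofHom e)
  refine free_of_retraction_ker hf (r ∘ₗ h.hom) fun x ↦ ?_
  have hx : h.hom x = e x := LinearMap.congr_fun (congrArg ModuleCat.Hom.hom hh) x
  rw [LinearMap.comp_apply, hx, ← LinearMap.comp_apply, hre, LinearMap.id_apply]

end Module

/-- If `A` is a nonfree abelian group of cardinality `κ`, then
`Ext¹(A, ℤ^{(κ)}) ≠ 0`, where `ℤ^{(κ)}` is the free abelian group on `κ`
generators, here realized as `ι →₀ ℤ` for an index type `ι` of cardinality `κ`. -/
theorem stmt15 (A : Type) [AddCommGroup A] (hA : ¬ Module.Free ℤ A)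
    (ι : Type) (hcard : Cardinal.mk ι = Cardinal.mk A) :
    ¬ Subsingleton (Ext1 A (ι →₀ ℤ)) := by
  intro hExt
  obtain ⟨e⟩ := Cardinal.eq.mp hcard
  exact hA (Module.free_of_subsingleton_ext_one
    (Finsupp.linearCombination_surjective (R := ℤ) e.surjective) hExt)
end
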